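/- arXiv:1808.02352 — 7 statements merged into one kernel-verified Lean document; each statement's English description precedes it below -/
import Mathlib

section
/- Let k, d, n be positive integers with d < n, let 0 ≤ i ≤ ⌊d/k⌋ and r = d − ki. The family 𝒜_{r,i} = {S ⊆ [n] : |S ∩ [n−r]| ≤ i} is k-wise (n−d)-union (the union of any k of its members has size at most ki + r = d) and has size |𝒜_{r,i}| = 2^r · Σ_{j=0}^{i} C(n−r, j). Consequently the maximum size p(n,k,d) of a k-wise (n−d)-union family on [n] satisfies p(n,k,d) ≥ max_{0 ≤ i ≤ d/k} 2^{d−ki} · Σ_{j=0}^{i} C(n−d+ki, j). -/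
/-- A set `Y` is shattered by the family `F` if every subset of `Y`
is the trace of some member of `F` on `Y`. -/
def Shatters {α : Type*} [DecidableEq α] (F : Finset (Finset α)) (Y : Finset α) : Prop :=
  ∀ T ⊆ Y, ∃ S ∈ F, S ∩ Y = T

/-- The VC dimension of a family: the largest cardinality of a shattered set. -/
noncomputable def vcDim {α : Type*} [DecidableEq α] (F : Finset (Finset α)) : ℕ :=
  sSup {m | ∃ Y : Finset α, Shatters F Y ∧ Y.card = m}

/-- `S₁ △ S₂ △ ⋯ △ S_k` for a `k`-tuple of sets. -/
def symmDiffAll {α : Type*} [DecidableEq α] {k : ℕ} (f : Fin k → Finset α) : Finset α :=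
  (List.ofFn f).foldr symmDiff ∅

/-- The `k`-fold symmetric difference family `△𝒜^k`. -/
def symmDiffFam {α : Type*} [DecidableEq α] (k : ℕ) (A : Finset (Finset α)) :
    Finset (Finset α) :=
  (Fintype.piFinset fun _ : Fin k => A).image symmDiffAll

/-- The family `𝒜₁ △ ⋯ △ 𝒜ₖ`. -/
def symmDiffFamMulti {α : Type*} [DecidableEq α] {k : ℕ} (A : Fin k → Finset (Finset α)) :
    Finset (Finset α) :=
  (Fintype.piFinset A).image symmDiffAll

/-- A family is `k`-wise `(n-d)`-union if any `k` of its members have union of size `≤ d`. -/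
def KwiseUnion {α : Type*} [DecidableEq α] (k d : ℕ) (A : Finset (Finset α)) : Prop :=
  ∀ f : Fin k → Finset α, (∀ i, f i ∈ A) → (Finset.univ.sup f).card ≤ d

/-- The `i`-compression of a family. -/
def compress {α : Type*} [DecidableEq α] (i : α) (A : Finset (Finset α)) :
    Finset (Finset α) :=
  A.image fun S => if S ∈ A ∧ S.erase i ∈ A then S else S.erase i

/-- The `(i,j)`-shift of a family. -/
def shiftIJ {α : Type*} [DecidableEq α] (i j : α) (A : Finset (Finset α)) :
    Finset (Finset α) :=
  A.image fun S => if i ∉ S ∧ j ∈ S ∧ insert i (S.erase j) ∉ A then insert i (S.erase j) else S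

/-- `p(n,k,d)`: the maximum size of a `k`-wise `(n-d)`-union family on `[n]`. -/
noncomputable def pMax (n k d : ℕ) : ℕ :=
  sSup {m | ∃ F : Finset (Finset (Fin n)), KwiseUnion k d F ∧ F.card = m}

/-! Split `Fin n` into the `n - r` low points `x < n - r` and the `r` high points. A member of the
family meets the low part in at most `i` points, so `k` members cover at most `k * i` low points
and at most all `r` high points: `k * i + r = d` in total. A member is an independent choice of a
low part of size at most `i` and an arbitrary high part, which gives the count. -/

open Finset

namespace Finset

variable {α : Type*}

theorem card_powerset_filter_card_le (s : Finset α) (i : ℕ) :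
    #{A ∈ s.powerset | #A ≤ i} = ∑ j ∈ range (i + 1), (#s).choose j := by
  rw [card_eq_sum_card_fiberwise (f := card) (t := range (i + 1))
    (fun A hA => mem_range_succ_iff.2 (mem_filter.1 hA).2)]
  refine sum_congr rfl fun j hj => ?_
  rw [← card_powersetCard, powersetCard_eq_filter, filter_filter]
  exact congrArg card (filter_congr fun A _ => by grind)

variable [DecidableEq α] (p : α → Prop) [DecidablePred p]

theorem filter_union_eq_left_of_forall {s t : Finset α} (hs : ∀ x ∈ s, p x)
    (ht : ∀ x ∈ t, ¬ p x) : (s ∪ t).filter p = s := by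
  rw [filter_union, filter_true_of_mem hs, filter_false_of_mem ht, union_empty]

variable [Fintype α]

theorem card_filter_card_filter_le (i : ℕ) :
    #{S : Finset α | #(S.filter p) ≤ i} =
      2 ^ #{x | ¬ p x} * ∑ j ∈ range (i + 1), (#{x | p x}).choose j := by
  have hsplit : ∀ A B : Finset α, (∀ x ∈ A, p x) → (∀ x ∈ B, ¬ p x) →
      (A ∪ B).filter p = A ∧ (A ∪ B).filter (¬ p ·) = B := fun A B hA hB =>
    ⟨filter_union_eq_left_of_forall p hA hB, by
      rw [union_comm]; exact filter_union_eq_left_of_forall _ hB fun x hx => not_not.2 (hA x hx)⟩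
  rw [← card_powerset_filter_card_le, ← card_powerset, mul_comm, ← card_product]
  refine card_nbij' (fun S => (S.filter p, S.filter (¬ p ·))) (fun AB => AB.1 ∪ AB.2)
    ?_ ?_ (fun S _ => filter_union_filter_not_eq p S) ?_
  · intro S hS
    simp_all [subset_iff]
  · rintro ⟨A, B⟩ hAB
    simp only [coe_product, Set.mem_prod, mem_coe, mem_filter, mem_powerset, subset_iff,
      mem_univ, true_and] at hAB ⊢
    rw [(hsplit A B hAB.1.1 hAB.2).1]
    exact hAB.1.2
  · rintro ⟨A, B⟩ hAB
    simp only [coe_product, Set.mem_prod, mem_coe, mem_filter, mem_powerset, subset_iff,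
      mem_univ, true_and] at hAB
    obtain ⟨hpA, hpB⟩ := hsplit A B hAB.1.1 hAB.2
    simp only [hpA, hpB]

end Finset

theorem kwiseUnion_filter_card_filter_le {α : Type*} [DecidableEq α] [Fintype α] (p : α → Prop)
    [DecidablePred p] (k i : ℕ) :
    KwiseUnion k (k * i + #{x | ¬ p x}) {S : Finset α | #(S.filter p) ≤ i} := by
  intro f hf
  rw [← card_filter_add_card_filter_not p]
  gcongr ?_ + ?_
  · rw [sup_eq_biUnion, filter_biUnion]
    exact (card_biUnion_le_card_mul univ _ i fun j _ => (mem_filter.1 (hf j)).2).trans_eq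
      (by simp)
  · exact card_le_card (filter_subset_filter _ (subset_univ _))

theorem le_pMax {n k d : ℕ} {F : Finset (Finset (Fin n))} (hF : KwiseUnion k d F) :
    #F ≤ pMax n k d :=
  le_csSup ⟨2 ^ n, by rintro m ⟨G, -, rfl⟩; simpa using G.card_le_univ⟩ ⟨F, hF, rfl⟩

theorem Fin.card_filter_not_val_lt_sub {n r : ℕ} (hr : r ≤ n) :
    #{x : Fin n | ¬ (x : ℕ) < n - r} = r := by
  have := card_filter_add_card_filter_not (s := univ) fun x : Fin n => (x : ℕ) < n - r
  rw [Fin.card_filter_val_lt, card_univ, Fintype.card_fin] at this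
  omega

theorem kwiseUnion_filter_card_filter_val_lt {n k d i : ℕ} (hdn : d ≤ n) (hki : k * i ≤ d) :
    KwiseUnion k d
      {S : Finset (Fin n) | #(S.filter fun x : Fin n => (x : ℕ) < n - (d - k * i)) ≤ i} := by
  have := kwiseUnion_filter_card_filter_le (fun x : Fin n => (x : ℕ) < n - (d - k * i)) k i
  rwa [Fin.card_filter_not_val_lt_sub ((Nat.sub_le d _).trans hdn), Nat.add_sub_cancel' hki]
    at this

theorem card_filter_card_filter_val_lt {n r : ℕ} (hr : r ≤ n) (i : ℕ) :
    #{S : Finset (Fin n) | #(S.filter fun x : Fin n => (x : ℕ) < n - r) ≤ i} =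
      2 ^ r * ∑ j ∈ range (i + 1), (n - r).choose j := by
  rw [card_filter_card_filter_le, Fin.card_filter_not_val_lt_sub hr, Fin.card_filter_val_lt,
    min_eq_right (Nat.sub_le n r)]

theorem statement12_general (k d n : ℕ) (hdn : d < n)
    (i : ℕ) (hi : i ≤ d / k) :
    KwiseUnion k d
        (Finset.univ.filter
          (fun S : Finset (Fin n) =>
            (S.filter fun x : Fin n => (x : ℕ) < n - (d - k * i)).card ≤ i)) ∧
      (Finset.univ.filter
          (fun S : Finset (Fin n) =>
            (S.filter fun x : Fin n => (x : ℕ) < n - (d - k * i)).card ≤ i)).card =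
        2 ^ (d - k * i) * ∑ j ∈ Finset.range (i + 1), (n - (d - k * i)).choose j ∧
      ∀ i' : ℕ, i' ≤ d / k →
        2 ^ (d - k * i') * ∑ j ∈ Finset.range (i' + 1), (n - d + k * i').choose j ≤
          pMax n k d := by
  have hki : ∀ {i}, i ≤ d / k → k * i ≤ d := fun h =>
    (Nat.mul_le_mul_left k h).trans (Nat.mul_div_le d k)
  refine ⟨kwiseUnion_filter_card_filter_val_lt hdn.le (hki hi),
    card_filter_card_filter_val_lt ((Nat.sub_le d _).trans hdn.le) i, fun i' hi' => ?_⟩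
  rw [← tsub_tsub_assoc hdn.le (hki hi'),
    ← card_filter_card_filter_val_lt ((Nat.sub_le d _).trans hdn.le)]
  exact le_pMax (kwiseUnion_filter_card_filter_val_lt hdn.le (hki hi'))

/-- for `0 ≤ i ≤ ⌊d/k⌋` and `r = d − ki`, the family
`𝒜_{r,i} = {S ⊆ [n] : |S ∩ [n−r]| ≤ i}` is `k`-wise `(n−d)`-union and has size
`2^r · ∑_{j=0}^{i} C(n−r, j)`; consequently
`p(n,k,d) ≥ max_{0 ≤ i ≤ d/k} 2^{d−ki} · ∑_{j=0}^{i} C(n−d+ki, j)`. -/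
theorem statement12 (k d n : ℕ) (hk : 0 < k) (hd : 0 < d) (hdn : d < n)
    (i : ℕ) (hi : i ≤ d / k) :
    KwiseUnion k d
        (Finset.univ.filter
          (fun S : Finset (Fin n) =>
            (S.filter fun x : Fin n => (x : ℕ) < n - (d - k * i)).card ≤ i)) ∧
      (Finset.univ.filter
          (fun S : Finset (Fin n) =>
            (S.filter fun x : Fin n => (x : ℕ) < n - (d - k * i)).card ≤ i)).card =
        2 ^ (d - k * i) * ∑ j ∈ Finset.range (i + 1), (n - (d - k * i)).choose j ∧
      ∀ i' : ℕ, i' ≤ d / k →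
        2 ^ (d - k * i') * ∑ j ∈ Finset.range (i' + 1), (n - d + k * i').choose j ≤
          pMax n k d :=
  statement12_general k d n hdn i hi
end

section
/- For all positive integers d ≤ n, there exists a family 𝒜 of subsets of [n] satisfying VC(𝒜 ∩ 𝒜) ≤ d, VC(𝒜 ∪ 𝒜) ≤ d, and |𝒜| > (n/d)^d. -/
section DownClosed

variable {α : Type*} [DecidableEq α] {r : α → α → Prop}

def IsDownClosed (r : α → α → Prop) (S : Finset α) : Prop :=
  ∀ ⦃x⦄, x ∈ S → ∀ ⦃y⦄, r y x → y ∈ S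

lemma IsDownClosed.inter {S T : Finset α} (hS : IsDownClosed r S) (hT : IsDownClosed r T) :
    IsDownClosed r (S ∩ T) := by
  intro x hx y hyx
  rw [Finset.mem_inter] at hx ⊢
  exact ⟨hS hx.1 hyx, hT hx.2 hyx⟩

lemma IsDownClosed.union {S T : Finset α} (hS : IsDownClosed r S) (hT : IsDownClosed r T) :
    IsDownClosed r (S ∪ T) := by
  intro x hx y hyx
  rw [Finset.mem_union] at hx ⊢
  exact hx.imp (hS · hyx) (hT · hyx)

lemma Shatters.eq_of_rel {F : Finset (Finset α)} {Y : Finset α}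
    (hF : ∀ S ∈ F, IsDownClosed r S) (hY : Shatters F Y) {x y : α} (hx : x ∈ Y) (hy : y ∈ Y)
    (hyx : r y x) : y = x := by
  obtain ⟨S, hSF, hSY⟩ := hY {x} (Finset.singleton_subset_iff.mpr hx)
  have hxS : x ∈ S := (Finset.mem_inter.mp (hSY ▸ Finset.mem_singleton_self x)).1
  have hyS : y ∈ S ∩ Y := Finset.mem_inter.mpr ⟨hF S hSF hxS hyx, hy⟩
  simpa [hSY] using hyS

lemma vcDim_le_card_of_isDownClosed {β : Type*} [Fintype β] (f : α → β)
    (hf : ∀ x y, f x = f y → r x y ∨ r y x) {F : Finset (Finset α)}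
    (hF : ∀ S ∈ F, IsDownClosed r S) : vcDim F ≤ Fintype.card β := by
  refine csSup_le' ?_
  rintro _ ⟨Y, hY, rfl⟩
  refine (Finset.card_le_card_of_injOn f (fun _ _ => Finset.mem_coe.mpr (Finset.mem_univ _)) ?_)
  intro x hx y hy hxy
  rcases hf x y hxy with h | h
  · exact hY.eq_of_rel hF hy hx h
  · exact (hY.eq_of_rel hF hx hy h).symm

end DownClosed

section Residue

variable {n d : ℕ}

def ResidueLE (d : ℕ) (y x : Fin n) : Prop :=
  y ≤ x ∧ (y : ℕ) ≡ x [MOD d]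

lemma vcDim_le_of_isDownClosed_residueLE (hd : 0 < d) {F : Finset (Finset (Fin n))}
    (hF : ∀ S ∈ F, IsDownClosed (ResidueLE d) S) : vcDim F ≤ d := by
  have hres : ∀ x y : Fin n, (⟨x % d, Nat.mod_lt _ hd⟩ : Fin d) = ⟨y % d, Nat.mod_lt _ hd⟩ →
      ResidueLE d x y ∨ ResidueLE d y x := fun x y hxy => by
    have hmod : (x : ℕ) ≡ y [MOD d] := Fin.mk.inj hxy
    exact (le_total x y).imp (⟨·, hmod⟩) (⟨·, hmod.symm⟩)
  simpa using vcDim_le_card_of_isDownClosed _ hres hF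

/-- `x / d` is the position of `x` in its residue class, so this set consists of the first `g i`
elements of the class of each `i : Fin d`. -/
def residuePrefix (n : ℕ) (hd : 0 < d) (g : Fin d → ℕ) : Finset (Fin n) :=
  {x | (x : ℕ) / d < g ⟨x % d, Nat.mod_lt _ hd⟩}

lemma residuePrefix_isDownClosed (hd : 0 < d) (g : Fin d → ℕ) :
    IsDownClosed (ResidueLE d) (residuePrefix n hd g) := by
  intro x hx y ⟨hle, hmod⟩
  simp only [residuePrefix, Finset.mem_filter, Finset.mem_univ, true_and] at hx ⊢
  rw [show (⟨y % d, Nat.mod_lt _ hd⟩ : Fin d) = ⟨x % d, Nat.mod_lt _ hd⟩ from Fin.ext hmod]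
  exact (Nat.div_le_div_right hle).trans_lt hx

lemma mk_mem_residuePrefix_iff (hd : 0 < d) (g : Fin d → ℕ) (i : Fin d) {u : ℕ}
    (h : i + u * d < n) : (⟨i + u * d, h⟩ : Fin n) ∈ residuePrefix n hd g ↔ u < g i := by
  have hdiv : (i + u * d) / d = u := by
    rw [Nat.add_mul_div_right _ _ hd, Nat.div_eq_of_lt i.isLt, zero_add]
  have hmod : (i + u * d) % d = i := by
    rw [Nat.add_mul_mod_self_right, Nat.mod_eq_of_lt i.isLt]
  simp [residuePrefix, hdiv, hmod]

lemma residuePrefix_injective (hd : 0 < d) :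
    Function.Injective fun g : Fin d → Fin (n / d + 1) => residuePrefix n hd fun i => g i := by
  intro g g' hgg
  funext i
  have hlt : ∀ u < n / d, u < (g i : ℕ) ↔ u < g' i := fun u hu => by
    have hud : (u + 1) * d ≤ n :=
      (Nat.mul_le_mul_right d hu).trans (Nat.div_mul_le_self n d)
    have hin : (i : ℕ) + u * d < n := by rw [Nat.succ_mul] at hud; omega
    have hmem := mk_mem_residuePrefix_iff hd (fun j => (g j : ℕ)) i hin
    rw [show (residuePrefix n hd fun j => (g j : ℕ)) = _ from hgg] at hmem
    exact hmem.symm.trans (mk_mem_residuePrefix_iff hd _ i hin)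
  have hgi := (g i).isLt
  have hgi' := (g' i).isLt
  have := hlt (min (g i) (g' i))
  apply Fin.ext
  omega

end Residue

theorem statement13_general (n d : ℕ) (hd : 0 < d) :
    ∃ A : Finset (Finset (Fin n)),
      vcDim (Finset.image₂ (fun S T => S ∩ T) A A) ≤ d ∧
      vcDim (Finset.image₂ (fun S T => S ∪ T) A A) ≤ d ∧
      ((n : ℝ) / (d : ℝ)) ^ d < (A.card : ℝ) := by
  set A := (Finset.univ : Finset (Fin d → Fin (n / d + 1))).image
    fun g => residuePrefix n hd fun i => g i
  have hA : ∀ S ∈ A, IsDownClosed (ResidueLE d) S := by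
    simp [A, residuePrefix_isDownClosed]
  refine ⟨A, vcDim_le_of_isDownClosed_residueLE hd ?_,
    vcDim_le_of_isDownClosed_residueLE hd ?_, ?_⟩
  · exact Finset.forall_mem_image₂.mpr fun S hS T hT => (hA S hS).inter (hA T hT)
  · exact Finset.forall_mem_image₂.mpr fun S hS T hT => (hA S hS).union (hA T hT)
  · have hlt : (n : ℝ) / d < ((n / d + 1 : ℕ) : ℝ) := by
      simpa [Nat.floor_div_eq_div] using Nat.lt_floor_add_one ((n : ℝ) / d)
    rw [Finset.card_image_of_injective _ (residuePrefix_injective hd), Finset.card_univ,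
      Fintype.card_fun, Fintype.card_fin, Fintype.card_fin, Nat.cast_pow]
    exact pow_lt_pow_left₀ hlt (by positivity) hd.ne'

/-- for positive `d ≤ n` there is a family `𝒜 ⊆ 2^[n]` with
`VC(𝒜 ∩ 𝒜) ≤ d`, `VC(𝒜 ∪ 𝒜) ≤ d` and `|𝒜| > (n/d)^d`. -/
theorem statement13 (n d : ℕ) (hd : 0 < d) (hdn : d ≤ n) :
    ∃ A : Finset (Finset (Fin n)),
      vcDim (Finset.image₂ (fun S T => S ∩ T) A A) ≤ d ∧
      vcDim (Finset.image₂ (fun S T => S ∪ T) A A) ≤ d ∧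
      ((n : ℝ) / (d : ℝ)) ^ d < (A.card : ℝ) :=
  statement13_general n d hd
end

section
/- Let d ≤ n be positive integers and let 𝒜 be the family of subsets S of [n] satisfying monotonicity modulo d: for every i ∈ S with i > d, also i − d ∈ S. Then VC(𝒜) = d. -/
lemma mono_chain {d : ℕ} (S : Finset ℕ) (hS : ∀ i ∈ S, d < i → i - d ∈ S)
    (i : ℕ) (hi : 0 < i) : ∀ m : ℕ, i + m * d ∈ S → i ∈ S := by
  intro m
  induction m with
  | zero => simp
  | succ k ih =>
    intro h
    apply ih
    have hgt : d < i + (k + 1) * d := by nlinarith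
    have h2 := hS _ h hgt
    have h3 : i + (k + 1) * d - d = i + k * d := by ring_nf; omega
    rwa [h3] at h2
/-- the family of subsets of `[n] = {1,…,n}` that are monotone modulo `d`
has VC dimension exactly `d`. -/
theorem statement15 (n d : ℕ) (hd : 0 < d) (hdn : d ≤ n) :
    vcDim
        ((Finset.Icc 1 n).powerset.filter
          (fun S : Finset ℕ => ∀ i ∈ S, d < i → i - d ∈ S)) = d := by
  set A := (Finset.Icc 1 n).powerset.filter
      (fun S : Finset ℕ => ∀ i ∈ S, d < i → i - d ∈ S) with hA
  have hbound : ∀ m ∈ {m | ∃ Y : Finset ℕ, Shatters A Y ∧ Y.card = m}, m ≤ d := by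
    rintro m ⟨Y, hsh, rfl⟩
    by_contra hgt
    push_neg at hgt
    -- Y ⊆ Icc 1 n
    obtain ⟨S₀, hS₀A, hS₀⟩ := hsh Y (subset_refl Y)
    have hYsub : Y ⊆ Finset.Icc 1 n := by
      intro y hy
      have hyS : y ∈ S₀ := by
        have : y ∈ S₀ ∩ Y := by rw [hS₀]; exact hy
        exact (Finset.mem_inter.mp this).1
      have := (Finset.mem_filter.mp hS₀A).1
      exact Finset.mem_powerset.mp this hyS
    -- pigeonhole
    have hmaps : ∀ y ∈ Y, y % d ∈ Finset.range d := by
      intro y _; exact Finset.mem_range.mpr (Nat.mod_lt _ hd)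
    have hcard : (Finset.range d).card < Y.card := by simpa using hgt
    obtain ⟨a, ha, b, hb, hab, hmod⟩ :=
      Finset.exists_ne_map_eq_of_card_lt_of_maps_to hcard hmaps
    -- wlog a < b
    rcases Nat.lt_or_ge a b with hlt | hge
    · obtain ⟨S, hSA, hSY⟩ := hsh {b} (Finset.singleton_subset_iff.mpr hb)
      have hbS : b ∈ S := by
        have : b ∈ S ∩ Y := by rw [hSY]; exact Finset.mem_singleton_self b
        exact (Finset.mem_inter.mp this).1
      have hmono := (Finset.mem_filter.mp hSA).2
      have hdvd : d ∣ b - a := (Nat.modEq_iff_dvd' hlt.le).mp hmod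
      obtain ⟨c, hc⟩ := hdvd
      have ha1 : 0 < a := (Finset.mem_Icc.mp (hYsub ha)).1
      have hbe : a + c * d = b := by rw [mul_comm]; omega
      have haS : a ∈ S := mono_chain S hmono a ha1 c (by rw [hbe]; exact hbS)
      have : a ∈ S ∩ Y := Finset.mem_inter.mpr ⟨haS, ha⟩
      rw [hSY, Finset.mem_singleton] at this
      exact hab this
    · have hlt : b < a := lt_of_le_of_ne hge (Ne.symm hab)
      obtain ⟨S, hSA, hSY⟩ := hsh {a} (Finset.singleton_subset_iff.mpr ha)
      have haS : a ∈ S := by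
        have : a ∈ S ∩ Y := by rw [hSY]; exact Finset.mem_singleton_self a
        exact (Finset.mem_inter.mp this).1
      have hmono := (Finset.mem_filter.mp hSA).2
      have hdvd : d ∣ a - b := (Nat.modEq_iff_dvd' hlt.le).mp hmod.symm
      obtain ⟨c, hc⟩ := hdvd
      have hb1 : 0 < b := (Finset.mem_Icc.mp (hYsub hb)).1
      have hbe : b + c * d = a := by rw [mul_comm]; omega
      have hbS : b ∈ S := mono_chain S hmono b hb1 c (by rw [hbe]; exact haS)
      have : b ∈ S ∩ Y := Finset.mem_inter.mpr ⟨hbS, hb⟩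
      rw [hSY, Finset.mem_singleton] at this
      exact hab this.symm
  have hmem : d ∈ {m | ∃ Y : Finset ℕ, Shatters A Y ∧ Y.card = m} := by
    refine ⟨Finset.Icc 1 d, ?_, by simp⟩
    intro T hT
    refine ⟨T, ?_, ?_⟩
    · rw [hA, Finset.mem_filter, Finset.mem_powerset]
      refine ⟨hT.trans (Finset.Icc_subset_Icc_right hdn), ?_⟩
      intro i hi hdi
      exact absurd (Finset.mem_Icc.mp (hT hi)).2 (not_le.mpr hdi)
    · exact Finset.inter_eq_left.mpr hT
  apply le_antisymm
  · exact csSup_le ⟨d, hmem⟩ hbound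
  · exact le_csSup ⟨d, hbound⟩ hmem
end

section
/- Let d ≤ n be positive integers and let 𝒜 be the family of subsets S of [n] satisfying monotonicity modulo d: for every i ∈ S with i > d, also i − d ∈ S. Then |𝒜| = ∏_{k=1}^{d} ⌊(n−k)/d + 2⌋, and this quantity is strictly greater than (n/d)^d. -/
/-!
The positive integers are the disjoint union of the `d` chains `k + 1, k + 1 + d, k + 1 + 2d, …`
(`k < d`), and a set is monotone modulo `d` exactly when it meets each chain in an initial
segment. Inside `[n]` the `k`-th chain has `⌊(n - k - 1)/d⌋ + 1` elements, so these sets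
correspond to the choices of prefix lengths `c k ≤ ⌊(n - k - 1)/d⌋ + 1`, which gives the product.
Each factor exceeds `n / d` because `n < d (⌊(n - k)/d⌋ + 2)` for `k ≤ d`.
-/

open Finset

theorem Nat.exists_forall_iff_lt_of_antitone {p : ℕ → Prop} (hp : Antitone p) (h : ∃ j, ¬p j) :
    ∃ m, ∀ j, p j ↔ j < m := by
  classical
  refine ⟨Nat.find h, fun j => ⟨fun hj => ?_, fun hj => not_not.1 (Nat.find_min h hj)⟩⟩
  by_contra! hle
  exact Nat.find_spec h (hp hle hj)

theorem Finset.prod_Icc_one_eq_prod_fin {M : Type*} [CommMonoid M] (f : ℕ → M) (d : ℕ) :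
    ∏ k ∈ Icc 1 d, f k = ∏ k : Fin d, f (k + 1) := by
  rw [Fin.prod_univ_eq_prod_range (fun k => f (k + 1)), range_eq_Ico, prod_Ico_add']
  rfl

section Chains

variable {d n : ℕ}

def chainElem (d : ℕ) (k : Fin d) (j : ℕ) : ℕ := k + 1 + j * d

theorem chainElem_inj {k k' : Fin d} {j j' : ℕ} :
    chainElem d k j = chainElem d k' j' ↔ k = k' ∧ j = j' := by
  refine ⟨fun h => ?_, fun ⟨hk, hj⟩ => hk ▸ hj ▸ rfl⟩
  have hkk' : (k : ℕ) = k' := by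
    simpa [Nat.add_mul_mod_self_right, Nat.mod_eq_of_lt k.2, Nat.mod_eq_of_lt k'.2] using
      congrArg (· % d) (show (k : ℕ) + j * d = k' + j' * d by unfold chainElem at h; omega)
  refine ⟨Fin.ext hkk', Nat.eq_of_mul_eq_mul_right k.pos ?_⟩
  unfold chainElem at h
  omega

theorem exists_chainElem_eq (hd : 0 < d) {i : ℕ} (hi : i ≠ 0) : ∃ k j, chainElem d k j = i :=
  ⟨⟨(i - 1) % d, Nat.mod_lt _ hd⟩, (i - 1) / d, by
    have := Nat.mod_add_div' (i - 1) d
    show (i - 1) % d + 1 + (i - 1) / d * d = i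
    omega⟩

theorem chainElem_succ (k : Fin d) (j : ℕ) : chainElem d k (j + 1) = chainElem d k j + d := by
  unfold chainElem
  ring

theorem lt_chainElem_iff {k : Fin d} {j : ℕ} : d < chainElem d k j ↔ 0 < j := by
  have := k.2
  cases j with
  | zero => simp [chainElem]
  | succ j =>
    simp only [chainElem_succ, Nat.succ_pos, iff_true]
    unfold chainElem
    omega

theorem chainElem_le_iff (hdn : d ≤ n) {k : Fin d} {j : ℕ} :
    chainElem d k j ≤ n ↔ j ≤ (n - (k + 1)) / d := by
  have := k.2
  rw [Nat.le_div_iff_mul_le k.pos]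
  unfold chainElem
  omega

def chainPrefixes (d : ℕ) (c : Fin d → ℕ) : Finset ℕ :=
  univ.biUnion fun k => (range (c k)).image (chainElem d k)

theorem mem_chainPrefixes {c : Fin d → ℕ} {i : ℕ} :
    i ∈ chainPrefixes d c ↔ ∃ k, ∃ j < c k, chainElem d k j = i := by
  simp [chainPrefixes]

theorem chainElem_mem_chainPrefixes {c : Fin d → ℕ} {k : Fin d} {j : ℕ} :
    chainElem d k j ∈ chainPrefixes d c ↔ j < c k := by
  simp only [mem_chainPrefixes, chainElem_inj]
  constructor
  · rintro ⟨k, j, hj, rfl, rfl⟩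
    exact hj
  · exact fun hj => ⟨k, j, hj, rfl, rfl⟩

theorem chainPrefixes_injective : Function.Injective (chainPrefixes d) := fun c c' h =>
  funext fun k => eq_of_forall_lt_iff fun j => by
    rw [← chainElem_mem_chainPrefixes, h, chainElem_mem_chainPrefixes]

theorem chainPrefixes_subset_Icc_iff (hdn : d ≤ n) {c : Fin d → ℕ} :
    chainPrefixes d c ⊆ Icc 1 n ↔ ∀ k : Fin d, c k ≤ (n - (k + 1)) / d + 1 := by
  constructor
  · intro h k
    by_contra! hlt
    have hmem : chainElem d k (c k - 1) ∈ chainPrefixes d c :=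
      chainElem_mem_chainPrefixes.2 (Nat.sub_lt (Nat.zero_lt_of_lt hlt) one_pos)
    have := (chainElem_le_iff hdn).1 (mem_Icc.1 (h hmem)).2
    omega
  · intro h i hi
    obtain ⟨k, j, hj, rfl⟩ := mem_chainPrefixes.1 hi
    refine mem_Icc.2 ⟨by unfold chainElem; omega, (chainElem_le_iff hdn).2 ?_⟩
    have := h k
    omega

def IsMonotoneMod (d : ℕ) (S : Finset ℕ) : Prop :=
  ∀ i ∈ S, d < i → i - d ∈ S

instance (d : ℕ) : DecidablePred (IsMonotoneMod d) := fun S =>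
  inferInstanceAs (Decidable (∀ i ∈ S, d < i → i - d ∈ S))

theorem isMonotoneMod_chainPrefixes (c : Fin d → ℕ) : IsMonotoneMod d (chainPrefixes d c) := by
  intro i hi hdi
  obtain ⟨k, j, hj, rfl⟩ := mem_chainPrefixes.1 hi
  obtain ⟨j, rfl⟩ := Nat.exists_eq_succ_of_ne_zero (lt_chainElem_iff.1 hdi).ne'
  rw [chainElem_succ, Nat.add_sub_cancel, chainElem_mem_chainPrefixes]
  omega

theorem IsMonotoneMod.exists_chainPrefixes_eq (hd : 0 < d) {S : Finset ℕ} (hS : IsMonotoneMod d S)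
    (hS₀ : 0 ∉ S) : ∃ c, chainPrefixes d c = S := by
  have hchain : ∀ k : Fin d, ∃ m, ∀ j, chainElem d k j ∈ S ↔ j < m := fun k =>
    Nat.exists_forall_iff_lt_of_antitone
      (antitone_nat_of_succ_le fun j hj => by
        simpa [chainElem_succ] using hS _ hj (lt_chainElem_iff.2 j.succ_pos))
      ⟨S.sup id, fun h => by
        have := le_sup (f := id) h
        have := Nat.le_mul_of_pos_right (S.sup id) hd
        simp only [chainElem, id] at *
        omega⟩
  choose c hc using hchain
  refine ⟨c, ext fun i => ⟨fun hi => ?_, fun hi => ?_⟩⟩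
  · obtain ⟨k, j, hj, rfl⟩ := mem_chainPrefixes.1 hi
    exact (hc k j).2 hj
  · obtain ⟨k, j, rfl⟩ := exists_chainElem_eq hd (ne_of_mem_of_not_mem hi hS₀)
    exact chainElem_mem_chainPrefixes.2 ((hc k j).1 hi)

theorem filter_isMonotoneMod_eq_image (hd : 0 < d) (hdn : d ≤ n) :
    (Icc 1 n).powerset.filter (IsMonotoneMod d) =
      (Fintype.piFinset fun k : Fin d => range ((n - (k + 1)) / d + 2)).image
        (chainPrefixes d) := by
  ext S
  simp only [mem_filter, mem_powerset, mem_image, Fintype.mem_piFinset, mem_range]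
  constructor
  · rintro ⟨hsub, hS⟩
    obtain ⟨c, rfl⟩ := hS.exists_chainPrefixes_eq hd fun h => by simpa using hsub h
    exact ⟨c, fun k => Nat.lt_succ_of_le ((chainPrefixes_subset_Icc_iff hdn).1 hsub k), rfl⟩
  · rintro ⟨c, hc, rfl⟩
    exact ⟨(chainPrefixes_subset_Icc_iff hdn).2 fun k => Nat.lt_succ_iff.1 (hc k),
      isMonotoneMod_chainPrefixes c⟩

theorem card_filter_isMonotoneMod (hd : 0 < d) (hdn : d ≤ n) :
    #((Icc 1 n).powerset.filter (IsMonotoneMod d)) = ∏ k ∈ Icc 1 d, ((n - k) / d + 2) := by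
  rw [filter_isMonotoneMod_eq_image hd hdn, card_image_of_injective _ chainPrefixes_injective,
    Fintype.card_piFinset, prod_Icc_one_eq_prod_fin]
  simp only [card_range]

end Chains

theorem div_lt_sub_div_add_two {n d k : ℕ} (hd : 0 < d) (hk : k ≤ d) :
    (n : ℝ) / d < ((n - k) / d + 2 : ℕ) := by
  rw [div_lt_iff₀ (by exact_mod_cast hd)]
  have := Nat.lt_div_mul_add (a := n - k) hd
  exact_mod_cast (show n < ((n - k) / d + 2) * d by rw [add_mul]; omega)

theorem div_pow_lt_prod_sub_div_add_two {n d : ℕ} (hd : 0 < d) (hn : 0 < n) :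
    ((n : ℝ) / d) ^ d < ∏ k ∈ Icc 1 d, (((n - k) / d + 2 : ℕ) : ℝ) := by
  calc ((n : ℝ) / d) ^ d = ∏ _k ∈ Icc 1 d, (n : ℝ) / d := by
        rw [prod_const, Nat.card_Icc, Nat.add_sub_cancel]
    _ < _ := prod_lt_prod_of_nonempty (fun _ _ => by positivity)
        (fun k hk => div_lt_sub_div_add_two hd (mem_Icc.1 hk).2) ⟨1, mem_Icc.2 ⟨le_rfl, hd⟩⟩

/-- the family of subsets of `[n] = {1,…,n}` that are monotone modulo `d`
has size `∏_{k=1}^{d} (⌊(n−k)/d⌋ + 2)`, which is strictly greater than `(n/d)^d`. -/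
theorem statement16 (n d : ℕ) (hd : 0 < d) (hdn : d ≤ n) :
    ((Finset.Icc 1 n).powerset.filter
          (fun S : Finset ℕ => ∀ i ∈ S, d < i → i - d ∈ S)).card =
        ∏ k ∈ Finset.Icc 1 d, ((n - k) / d + 2) ∧
      ((n : ℝ) / (d : ℝ)) ^ d <
        ((∏ k ∈ Finset.Icc 1 d, ((n - k) / d + 2) : ℕ) : ℝ) := by
  refine ⟨card_filter_isMonotoneMod hd hdn, ?_⟩
  rw [Nat.cast_prod]
  exact div_pow_lt_prod_sub_div_add_two hd (hd.trans_le hdn)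
end

section
/- Let n ≥ 4 and let 𝒜 = 2^[n] ∖ {[1], [n]}, the family of all subsets of [n] except {1} and [n] itself. Then |𝒜| = 2^n − 2, 𝒜 ∩ 𝒜 = 2^[n] ∖ {[n]}, 𝒜 ∪ 𝒜 = 2^[n] ∖ {[1]}, and both 𝒜 ∩ 𝒜 and 𝒜 ∪ 𝒜 have VC dimension exactly n − 1. -/
open Finset hiding Shatters vcDim

section Family

variable {α : Type*} [Fintype α] [DecidableEq α]

lemma shatters_univ_iff {F : Finset (Finset α)} : Shatters F univ ↔ F = univ := by
  simp only [Shatters, subset_univ, inter_univ, exists_eq_right, true_implies,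
    eq_univ_iff_forall]

/-- Deleting one set `X` from `2^α` keeps every proper subset `Y` shattered: a trace `T ⊆ Y` is
realised both by `T` and by `insert x T` for a point `x ∉ Y`, and one of the two is not `X`. -/
lemma shatters_univ_sdiff_singleton_iff (X Y : Finset α) :
    Shatters (univ \ {X}) Y ↔ Y ≠ univ := by
  constructor
  · rintro hY rfl
    have hX : X ∈ (univ : Finset (Finset α)) \ {X} := by
      rw [shatters_univ_iff.mp hY]; exact mem_univ X
    simp at hX
  · intro hY T hTY
    obtain ⟨x, hxY⟩ : ∃ x, x ∉ Y := by simpa [eq_univ_iff_forall] using hY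
    have htrace : insert x T ∩ Y = T := by
      rw [insert_inter_of_notMem hxY, inter_eq_left.mpr hTY]
    by_cases hTX : T = X
    · refine ⟨insert x T, ?_, htrace⟩
      have hxT : x ∉ T := fun hx => hxY (hTY hx)
      simpa [← hTX] using hxT
    · exact ⟨T, by simpa using hTX, inter_eq_left.mpr hTY⟩

lemma vcDim_univ_sdiff_singleton (X : Finset α) :
    vcDim (univ \ {X}) = Fintype.card α - 1 := by
  have hset : {m | ∃ Y : Finset α, Shatters (univ \ {X}) Y ∧ Y.card = m} =
      Set.Iio (Fintype.card α) := by
    ext m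
    simp only [shatters_univ_sdiff_singleton_iff, ← card_lt_iff_ne_univ, Set.mem_ofPred_eq,
      Set.mem_Iio]
    constructor
    · rintro ⟨Y, hY, rfl⟩
      exact hY
    · intro hm
      obtain ⟨Y, -, rfl⟩ :=
        exists_subset_card_eq (s := (univ : Finset α)) (by simpa using hm.le)
      exact ⟨Y, hm, rfl⟩
  rw [vcDim, hset]
  rcases Fintype.card α with _ | k
  · simp
  · rw [show Set.Iio (k + 1) = Set.Iic k from Set.ext fun _ => Nat.lt_succ_iff, csSup_Iic]
    rfl

lemma card_univ_sdiff_singleton_univ {z : α} (hz : ({z} : Finset α) ≠ univ) :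
    ((univ : Finset (Finset α)) \ {{z}, univ}).card = 2 ^ Fintype.card α - 2 := by
  rw [card_sdiff_of_subset (subset_univ _), card_univ, Fintype.card_finset, card_pair hz]

lemma image₂_inter_univ_sdiff_singleton_univ (hα : 3 ≤ Fintype.card α) (z : α) :
    image₂ (fun S T => S ∩ T) ((univ : Finset (Finset α)) \ {{z}, univ})
      ((univ : Finset (Finset α)) \ {{z}, univ}) = (univ : Finset (Finset α)) \ {univ} := by
  ext S
  simp only [mem_image₂, mem_sdiff, mem_univ, true_and, mem_insert, mem_singleton, not_or]
  constructor
  · rintro ⟨A, ⟨-, hA⟩, B, -, rfl⟩ hAB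
    exact hA (inter_eq_univ.mp hAB).1
  · intro hS
    by_cases hSz : S = {z}
    · obtain ⟨x, y, hx, hy, hxy⟩ := one_lt_card_iff.mp <| show 1 < (univ.erase z).card by
        rw [card_erase_of_mem (mem_univ z), card_univ]; omega
      have hpair : ∀ w ≠ z, {z, w} ≠ ({z} : Finset α) ∧ {z, w} ≠ univ := fun w hw =>
        ⟨ne_of_apply_ne card (by rw [card_pair hw.symm, card_singleton]; omega),
          ne_of_apply_ne card (by rw [card_pair hw.symm, card_univ]; omega)⟩
      refine ⟨{z, x}, hpair x (ne_of_mem_erase hx), {z, y}, hpair y (ne_of_mem_erase hy), ?_⟩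
      rw [hSz, ← insert_inter_distrib, singleton_inter_of_notMem (by simpa using hxy),
        insert_empty]
    · exact ⟨S, ⟨hSz, hS⟩, S, ⟨hSz, hS⟩, inter_self S⟩

lemma image₂_union_univ_sdiff_singleton_univ (hα : 3 ≤ Fintype.card α) (z : α) :
    image₂ (fun S T => S ∪ T) ((univ : Finset (Finset α)) \ {{z}, univ})
      ((univ : Finset (Finset α)) \ {{z}, univ}) = (univ : Finset (Finset α)) \ {{z}} := by
  ext S
  simp only [mem_image₂, mem_sdiff, mem_univ, true_and, mem_insert, mem_singleton, not_or]
  constructor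
  · rintro ⟨A, ⟨hA, -⟩, B, ⟨hB, -⟩, rfl⟩ hAB
    rcases subset_singleton_iff.mp (hAB ▸ subset_union_left : A ⊆ {z}) with rfl | rfl
    · rcases subset_singleton_iff.mp (hAB ▸ subset_union_right : B ⊆ {z}) with rfl | rfl
      · simp at hAB
      · exact hB rfl
    · exact hA rfl
  · intro hS
    by_cases hSu : S = univ
    · obtain ⟨x, y, -, -, hxy⟩ := one_lt_card_iff.mp <| show 1 < (univ : Finset α).card by
        rw [card_univ]; omega
      have hcoatom : ∀ w, univ.erase w ≠ ({z} : Finset α) ∧ univ.erase w ≠ univ := fun w =>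
        ⟨ne_of_apply_ne card (by
            rw [card_erase_of_mem (mem_univ w), card_univ, card_singleton]; omega),
          ne_of_apply_ne card (by rw [card_erase_of_mem (mem_univ w), card_univ]; omega)⟩
      refine ⟨univ.erase x, hcoatom x, univ.erase y, hcoatom y, ?_⟩
      rw [hSu, eq_univ_iff_forall]
      intro t
      rw [mem_union, mem_erase, mem_erase]
      by_cases htx : t = x
      · exact .inr ⟨htx ▸ hxy, mem_univ t⟩
      · exact .inl ⟨htx, mem_univ t⟩
    · exact ⟨S, ⟨hS, hSu⟩, S, ⟨hS, hSu⟩, union_self S⟩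

end Family

/-- for `n ≥ 4` and `𝒜 = 2^[n] ∖ {{1}, [n]}`: `|𝒜| = 2^n − 2`,
`𝒜 ∩ 𝒜 = 2^[n] ∖ {[n]}`, `𝒜 ∪ 𝒜 = 2^[n] ∖ {{1}}`, and both `𝒜 ∩ 𝒜` and `𝒜 ∪ 𝒜`
have VC dimension exactly `n − 1`.  (Here the element `1 ∈ [n]` is `⟨0, _⟩ : Fin n`.) -/
theorem statement17 (n : ℕ) (hn : 4 ≤ n) :
    ((Finset.univ : Finset (Finset (Fin n))) \
          {({⟨0, by omega⟩} : Finset (Fin n)), (Finset.univ : Finset (Fin n))}).card =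
        2 ^ n - 2 ∧
      Finset.image₂ (fun S T => S ∩ T)
          ((Finset.univ : Finset (Finset (Fin n))) \
            {({⟨0, by omega⟩} : Finset (Fin n)), (Finset.univ : Finset (Fin n))})
          ((Finset.univ : Finset (Finset (Fin n))) \
            {({⟨0, by omega⟩} : Finset (Fin n)), (Finset.univ : Finset (Fin n))}) =
        (Finset.univ : Finset (Finset (Fin n))) \ {(Finset.univ : Finset (Fin n))} ∧
      Finset.image₂ (fun S T => S ∪ T)
          ((Finset.univ : Finset (Finset (Fin n))) \
            {({⟨0, by omega⟩} : Finset (Fin n)), (Finset.univ : Finset (Fin n))})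
          ((Finset.univ : Finset (Finset (Fin n))) \
            {({⟨0, by omega⟩} : Finset (Fin n)), (Finset.univ : Finset (Fin n))}) =
        (Finset.univ : Finset (Finset (Fin n))) \ {({⟨0, by omega⟩} : Finset (Fin n))} ∧
      vcDim
          (Finset.image₂ (fun S T => S ∩ T)
            ((Finset.univ : Finset (Finset (Fin n))) \
              {({⟨0, by omega⟩} : Finset (Fin n)), (Finset.univ : Finset (Fin n))})
            ((Finset.univ : Finset (Finset (Fin n))) \
              {({⟨0, by omega⟩} : Finset (Fin n)), (Finset.univ : Finset (Fin n))})) =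
        n - 1 ∧
      vcDim
          (Finset.image₂ (fun S T => S ∪ T)
            ((Finset.univ : Finset (Finset (Fin n))) \
              {({⟨0, by omega⟩} : Finset (Fin n)), (Finset.univ : Finset (Fin n))})
            ((Finset.univ : Finset (Finset (Fin n))) \
              {({⟨0, by omega⟩} : Finset (Fin n)), (Finset.univ : Finset (Fin n))})) =
        n - 1 := by
  have hcard : 3 ≤ Fintype.card (Fin n) := by rw [Fintype.card_fin]; omega
  have hz : ({⟨0, by omega⟩} : Finset (Fin n)) ≠ univ :=
    (card_lt_iff_ne_univ _).mp (by rw [card_singleton, Fintype.card_fin]; omega)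
  rw [image₂_inter_univ_sdiff_singleton_univ hcard,
    image₂_union_univ_sdiff_singleton_univ hcard, vcDim_univ_sdiff_singleton,
    vcDim_univ_sdiff_singleton, Fintype.card_fin]
  exact ⟨by simpa using card_univ_sdiff_singleton_univ hz, rfl, rfl, rfl, rfl⟩
end

section
/- Let n ≥ 4. For every family 𝒜 of subsets of [n] with |𝒜| = 2^n − 1, either 𝒜 ∩ 𝒜 = 2^[n] or 𝒜 ∪ 𝒜 = 2^[n]. Consequently, for n = d + 1 with d ≥ 3, the maximum size of a family 𝒜 ⊆ 2^[n] satisfying VC(𝒜 ∩ 𝒜) ≤ d and VC(𝒜 ∪ 𝒜) ≤ d equals 2^n − 2. -/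

lemma aux_part1 (n : ℕ) (hn : 4 ≤ n) (A : Finset (Finset (Fin n))) (hA : A.card = 2 ^ n - 1) :
    Finset.image₂ (fun S T => S ∩ T) A A = (Finset.univ : Finset (Finset (Fin n))) ∨
    Finset.image₂ (fun S T => S ∪ T) A A = (Finset.univ : Finset (Finset (Fin n))) := by
  have h2 : 1 ≤ 2 ^ n := Nat.one_le_two_pow
  have hcompl : Aᶜ.card = 1 := by
    rw [Finset.card_compl, hA, Fintype.card_finset, Fintype.card_fin]
    omega
  obtain ⟨M, hM⟩ := Finset.card_eq_one.mp hcompl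
  have hmem : ∀ S : Finset (Fin n), S ≠ M → S ∈ A := by
    intro S hS
    by_contra h
    have : S ∈ Aᶜ := Finset.mem_compl.mpr h
    rw [hM, Finset.mem_singleton] at this
    exact hS this
  have hMc : Mᶜ.card = n - M.card := by rw [Finset.card_compl, Fintype.card_fin]
  have hMle : M.card ≤ n := by
    simpa using (Finset.card_le_univ M)
  by_cases hcase : 2 ≤ Mᶜ.card
  · left
    obtain ⟨x, hx, y, hy, hxy⟩ := Finset.one_lt_card.mp hcase
    rw [Finset.mem_compl] at hx hy
    apply Finset.eq_univ_iff_forall.mpr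
    intro T
    by_cases hT : T = M
    · subst hT
      refine Finset.mem_image₂.mpr ⟨insert x T, hmem _ ?_, insert y T, hmem _ ?_, ?_⟩
      · exact (Finset.insert_ne_self).mpr hx
      · exact (Finset.insert_ne_self).mpr hy
      · ext a
        simp only [Finset.mem_inter, Finset.mem_insert]
        constructor
        · rintro ⟨h1 | h1, h2 | h2⟩
          · exact absurd (h1.symm.trans h2) hxy
          · exact h2
          · exact h1
          · exact h1
        · intro h; exact ⟨Or.inr h, Or.inr h⟩
    · exact Finset.mem_image₂.mpr ⟨T, hmem T hT, T, hmem T hT, Finset.inter_self T⟩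
  · right
    have hcard2 : 2 ≤ M.card := by omega
    obtain ⟨x, hx, y, hy, hxy⟩ := Finset.one_lt_card.mp hcard2
    apply Finset.eq_univ_iff_forall.mpr
    intro T
    by_cases hT : T = M
    · subst hT
      refine Finset.mem_image₂.mpr ⟨T.erase x, hmem _ ?_, T.erase y, hmem _ ?_, ?_⟩
      · exact (Finset.erase_ne_self).mpr hx
      · exact (Finset.erase_ne_self).mpr hy
      · ext a
        simp only [Finset.mem_union, Finset.mem_erase]
        constructor
        · rintro (⟨_, h⟩ | ⟨_, h⟩) <;> exact h
        · intro h
          rcases eq_or_ne a x with rfl | hax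
          · exact Or.inr ⟨fun h' => hxy (h' ▸ rfl), h⟩
          · exact Or.inl ⟨hax, h⟩
    · exact Finset.mem_image₂.mpr ⟨T, hmem T hT, T, hmem T hT, Finset.union_self T⟩

lemma aux_vc_le {n : ℕ} (F : Finset (Finset (Fin n))) (hF : F ≠ Finset.univ) :
    vcDim F ≤ n - 1 := by
  apply csSup_le'
  rintro m ⟨Y, hsh, rfl⟩
  have hle : Y.card ≤ n := by simpa using Finset.card_le_univ Y
  have hne : Y.card ≠ n := by
    intro h
    have hY : Y = Finset.univ := Finset.eq_univ_of_card Y (by simpa using h)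
    apply hF
    apply Finset.eq_univ_iff_forall.mpr
    intro T
    obtain ⟨S, hS, hST⟩ := hsh T (hY ▸ Finset.subset_univ T)
    rw [hY, Finset.inter_univ] at hST
    exact hST ▸ hS
  omega

lemma aux_vc_univ {n : ℕ} : n ≤ vcDim (Finset.univ : Finset (Finset (Fin n))) := by
  apply le_csSup
  · refine ⟨n, ?_⟩
    rintro m ⟨Y, _, rfl⟩
    simpa using Finset.card_le_univ Y
  · exact ⟨Finset.univ, fun T _ => ⟨T, Finset.mem_univ T, Finset.inter_univ T⟩, by simp⟩

/-- for `n ≥ 4`, any family of `2^n − 1` subsets of `[n]` has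
`𝒜 ∩ 𝒜 = 2^[n]` or `𝒜 ∪ 𝒜 = 2^[n]`; consequently, for `n = d + 1` with `d ≥ 3`, the
maximum size of a family with `VC(𝒜 ∩ 𝒜) ≤ d` and `VC(𝒜 ∪ 𝒜) ≤ d` is `2^n − 2`. -/
theorem statement18 :
    (∀ n : ℕ, 4 ≤ n → ∀ A : Finset (Finset (Fin n)), A.card = 2 ^ n - 1 →
        Finset.image₂ (fun S T => S ∩ T) A A = (Finset.univ : Finset (Finset (Fin n))) ∨
        Finset.image₂ (fun S T => S ∪ T) A A = (Finset.univ : Finset (Finset (Fin n)))) ∧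
      ∀ d n : ℕ, 3 ≤ d → n = d + 1 →
        sSup {m | ∃ A : Finset (Finset (Fin n)),
            vcDim (Finset.image₂ (fun S T => S ∩ T) A A) ≤ d ∧
            vcDim (Finset.image₂ (fun S T => S ∪ T) A A) ≤ d ∧ A.card = m} =
          2 ^ n - 2 := by
  constructor
  · exact aux_part1
  · intro d n hd hnd
    have hn4 : 4 ≤ n := by omega
    have h2n : 4 ≤ 2 ^ n := by
      calc 4 = 2 ^ 2 := by norm_num
      _ ≤ 2 ^ n := Nat.pow_le_pow_right (by norm_num) (by omega)
    have hcard_le : ∀ A : Finset (Finset (Fin n)), A.card ≤ 2 ^ n := by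
      intro A
      simpa [Fintype.card_finset, Fintype.card_fin] using Finset.card_le_univ A
    apply le_antisymm
    · apply csSup_le'
      rintro m ⟨A, h1, h2, rfl⟩
      have hint : Finset.image₂ (fun S T => S ∩ T) A A ≠ (Finset.univ : Finset (Finset (Fin n))) := by
        intro h
        rw [h] at h1
        have := aux_vc_univ (n := n)
        omega
      have huni : Finset.image₂ (fun S T => S ∪ T) A A ≠ (Finset.univ : Finset (Finset (Fin n))) := by
        intro h
        rw [h] at h2
        have := aux_vc_univ (n := n)
        omega
      have hle := hcard_le A
      by_cases hc : A.card = 2 ^ n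
      · exfalso
        have hA : A = Finset.univ :=
          Finset.eq_univ_of_card A (by simp [hc, Fintype.card_finset, Fintype.card_fin])
        apply hint
        apply Finset.eq_univ_iff_forall.mpr
        intro T
        exact Finset.mem_image₂.mpr ⟨T, hA ▸ Finset.mem_univ T, T, hA ▸ Finset.mem_univ T,
          Finset.inter_self T⟩
      · by_cases hc1 : A.card = 2 ^ n - 1
        · exfalso
          rcases aux_part1 n hn4 A hc1 with h | h
          · exact hint h
          · exact huni h
        · omega
    · set A0 : Finset (Finset (Fin n)) := Finset.univ \ {∅, Finset.univ} with hA0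
      have hUniv_not : (Finset.univ : Finset (Fin n)) ∉ A0 := by
        simp [hA0]
      have hEmpty_not : (∅ : Finset (Fin n)) ∉ A0 := by
        simp [hA0]
      have hempty_ne : (∅ : Finset (Fin n)) ≠ Finset.univ := by
        intro h
        have : (⟨0, by omega⟩ : Fin n) ∈ (∅ : Finset (Fin n)) := h ▸ Finset.mem_univ _
        simpa using this
      have hA0card : A0.card = 2 ^ n - 2 := by
        rw [hA0, Finset.card_sdiff_of_subset (Finset.subset_univ _)]
        rw [Finset.card_insert_of_notMem (by simpa using hempty_ne), Finset.card_singleton]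
        simp [Fintype.card_finset, Fintype.card_fin]
      have hint : Finset.image₂ (fun S T => S ∩ T) A0 A0 ≠ (Finset.univ : Finset (Finset (Fin n))) := by
        intro h
        have hm : (Finset.univ : Finset (Fin n)) ∈ Finset.image₂ (fun S T => S ∩ T) A0 A0 := by
          rw [h]; exact Finset.mem_univ _
        obtain ⟨S, hS, T, hT, hST⟩ := Finset.mem_image₂.mp hm
        have hSu : S = Finset.univ := by
          apply Finset.eq_univ_of_forall
          intro a
          have : a ∈ S ∩ T := by rw [hST]; exact Finset.mem_univ a
          exact (Finset.mem_inter.mp this).1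
        exact hUniv_not (hSu ▸ hS)
      have huni : Finset.image₂ (fun S T => S ∪ T) A0 A0 ≠ (Finset.univ : Finset (Finset (Fin n))) := by
        intro h
        have hm : (∅ : Finset (Fin n)) ∈ Finset.image₂ (fun S T => S ∪ T) A0 A0 := by
          rw [h]; exact Finset.mem_univ _
        obtain ⟨S, hS, T, hT, hST⟩ := Finset.mem_image₂.mp hm
        have hSe : S = ∅ := by
          apply Finset.eq_empty_of_forall_notMem
          intro a ha
          have : a ∈ (∅ : Finset (Fin n)) := hST ▸ Finset.mem_union_left T ha
          simpa using this
        exact hEmpty_not (hSe ▸ hS)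
      apply le_csSup
      · exact ⟨2 ^ n, by rintro m ⟨A, _, _, rfl⟩; exact hcard_le A⟩
      · refine ⟨A0, ?_, ?_, hA0card⟩
        · exact le_trans (aux_vc_le _ hint) (by omega)
        · exact le_trans (aux_vc_le _ huni) (by omega)
end

section
/- Let n be a positive integer and let 𝒜 be a family of subsets of [n] with VC(𝒜 ∩ 𝒜) ≤ 1 and VC(𝒜 ∪ 𝒜) ≤ 1. Then |𝒜| ≤ n + 1, and if |𝒜| = n + 1 then 𝒜 is a complete chain: up to a permutation of [n], 𝒜 = {∅, [1], [2], …, [n]}, i.e. 𝒜 consists of n + 1 subsets of [n] totally ordered by inclusion. -/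
section AuxSec
open Finset

lemma shatters_iff {α : Type*} [DecidableEq α] (F : Finset (Finset α)) (Y : Finset α) :
    _root_.Shatters F Y ↔ F.Shatters Y := by
  constructor
  · intro h t ht
    obtain ⟨S, hS, hSY⟩ := h t ht
    exact ⟨S, hS, by rwa [inter_comm]⟩
  · intro h T hT
    obtain ⟨S, hS, hSY⟩ := h hT
    exact ⟨S, hS, by rwa [inter_comm]⟩

lemma card_le_of_shatters {n : ℕ} (F : Finset (Finset (Fin n))) {Y : Finset (Fin n)}
    (h : _root_.Shatters F Y) : Y.card ≤ _root_.vcDim F := by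
  apply le_csSup
  · exact ⟨n, fun m ⟨Z, _, hZ⟩ => hZ ▸ (Z.card_le_univ.trans_eq (by simp))⟩
  · exact ⟨Y, h, rfl⟩

lemma card_le_of_vc {n : ℕ} (F : Finset (Finset (Fin n))) (h : _root_.vcDim F ≤ 1) :
    F.card ≤ n + 1 := by
  calc F.card ≤ F.shatterer.card := F.card_le_card_shatterer
    _ ≤ (insert (∅ : Finset (Fin n)) (Finset.univ.image fun x => ({x} : Finset (Fin n)))).card := by
        apply card_le_card
        intro s hs
        rw [mem_shatterer] at hs
        have hc : s.card ≤ 1 := le_trans (card_le_of_shatters F ((shatters_iff F s).mpr hs)) h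
        rcases Nat.le_one_iff_eq_zero_or_eq_one.mp hc with h0 | h1
        · simp [card_eq_zero.mp h0]
        · obtain ⟨x, rfl⟩ := card_eq_one.mp h1
          exact mem_insert_of_mem (mem_image.mpr ⟨x, mem_univ x, rfl⟩)
    _ ≤ n + 1 := by
        refine (card_insert_le _ _).trans ?_
        have h1 := card_image_le (s := (univ : Finset (Fin n)))
          (f := fun x => ({x} : Finset (Fin n)))
        simp only [card_univ, Fintype.card_fin] at h1
        omega

theorem statement19_aux (n : ℕ) (hn : 0 < n) (A : Finset (Finset (Fin n)))
    (hcap : _root_.vcDim (Finset.image₂ (fun S T => S ∩ T) A A) ≤ 1)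
    (hcup : _root_.vcDim (Finset.image₂ (fun S T => S ∪ T) A A) ≤ 1) :
    A.card ≤ n + 1 ∧
      (A.card = n + 1 →
        ∃ σ : Equiv.Perm (Fin n),
          A.image (fun S => S.image σ) =
            (Finset.range (n + 1)).image
              (fun j => Finset.univ.filter (fun x : Fin n => (x : ℕ) < j))) := by
  have hcardle : ∀ S : Finset (Fin n), S.card ≤ n :=
    fun S => S.card_le_univ.trans_eq (by simp)
  have hsubcap : A ⊆ Finset.image₂ (fun S T => S ∩ T) A A := fun S hS =>
    mem_image₂.mpr ⟨S, hS, S, hS, inter_self S⟩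
  have hsubcup : A ⊆ Finset.image₂ (fun S T => S ∪ T) A A := fun S hS =>
    mem_image₂.mpr ⟨S, hS, S, hS, union_self S⟩
  have hbound : A.card ≤ n + 1 :=
    le_trans (card_le_card hsubcap) (card_le_of_vc _ hcap)
  refine ⟨hbound, ?_⟩
  intro hA
  -- A is closed under intersection and union
  have hcapeq : Finset.image₂ (fun S T => S ∩ T) A A = A :=
    (eq_of_subset_of_card_le hsubcap ((card_le_of_vc _ hcap).trans hA.ge)).symm
  have hcupeq : Finset.image₂ (fun S T => S ∪ T) A A = A :=
    (eq_of_subset_of_card_le hsubcup ((card_le_of_vc _ hcup).trans hA.ge)).symm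
  have hclcap : ∀ S ∈ A, ∀ T ∈ A, S ∩ T ∈ A := fun S hS T hT =>
    hcapeq ▸ mem_image₂_of_mem hS hT
  have hclcup : ∀ S ∈ A, ∀ T ∈ A, S ∪ T ∈ A := fun S hS T hT =>
    hcupeq ▸ mem_image₂_of_mem hS hT
  -- A is a chain
  have hchain : ∀ S ∈ A, ∀ T ∈ A, S ⊆ T ∨ T ⊆ S := by
    intro S hS T hT
    by_contra hcon
    push_neg at hcon
    obtain ⟨x, hxS, hxT⟩ := not_subset.mp hcon.1
    obtain ⟨y, hyT, hyS⟩ := not_subset.mp hcon.2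
    have hxy : x ≠ y := fun h => hyS (h ▸ hxS)
    have hshat : _root_.Shatters A ({x, y} : Finset (Fin n)) := by
      intro T' hT'
      have hmemT' : ∀ z ∈ T', z = x ∨ z = y := by
        intro z hz
        have := hT' hz
        simp only [mem_insert, mem_singleton] at this
        exact this
      by_cases hx : x ∈ T' <;> by_cases hy : y ∈ T'
      · refine ⟨S ∪ T, hclcup S hS T hT, ?_⟩
        apply Finset.Subset.antisymm
        · intro z hz
          rcases (by simpa using (mem_inter.mp hz).2 : z = x ∨ z = y) with rfl | rfl
          · exact hx
          · exact hy
        · intro z hz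
          rcases hmemT' z hz with rfl | rfl
          · exact mem_inter.mpr ⟨mem_union_left _ hxS, by simp⟩
          · exact mem_inter.mpr ⟨mem_union_right _ hyT, by simp⟩
      · refine ⟨S, hS, ?_⟩
        apply Finset.Subset.antisymm
        · intro z hz
          rw [mem_inter] at hz
          rcases (by simpa using hz.2 : z = x ∨ z = y) with rfl | rfl
          · exact hx
          · exact absurd hz.1 hyS
        · intro z hz
          rcases hmemT' z hz with rfl | rfl
          · exact mem_inter.mpr ⟨hxS, by simp⟩
          · exact absurd hz hy
      · refine ⟨T, hT, ?_⟩
        apply Finset.Subset.antisymm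
        · intro z hz
          rw [mem_inter] at hz
          rcases (by simpa using hz.2 : z = x ∨ z = y) with rfl | rfl
          · exact absurd hz.1 hxT
          · exact hy
        · intro z hz
          rcases hmemT' z hz with rfl | rfl
          · exact absurd hz hx
          · exact mem_inter.mpr ⟨hyT, by simp⟩
      · refine ⟨S ∩ T, hclcap S hS T hT, ?_⟩
        apply Finset.Subset.antisymm
        · intro z hz
          rw [mem_inter, mem_inter] at hz
          rcases (by simpa using hz.2 : z = x ∨ z = y) with rfl | rfl
          · exact absurd hz.1.2 hxT
          · exact absurd hz.1.1 hyS
        · intro z hz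
          rcases hmemT' z hz with rfl | rfl
          · exact absurd hz hx
          · exact absurd hz hy
    have h2 : ({x, y} : Finset (Fin n)).card = 2 := by
      rw [card_insert_of_notMem (by simp [hxy]), card_singleton]
    have := card_le_of_shatters (Finset.image₂ (fun S T => S ∩ T) A A)
      (by rw [hcapeq]; exact hshat)
    omega
  -- cardinalities determine members
  have hinjcard : ∀ S ∈ A, ∀ T ∈ A, S.card = T.card → S = T := by
    intro S hS T hT h
    rcases hchain S hS T hT with hsub | hsub
    · exact eq_of_subset_of_card_le hsub h.ge
    · exact (eq_of_subset_of_card_le hsub h.le).symm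
  have hmono : ∀ S ∈ A, ∀ T ∈ A, S.card ≤ T.card → S ⊆ T := by
    intro S hS T hT h
    rcases hchain S hS T hT with hsub | hsub
    · exact hsub
    · have hTS : T = S := eq_of_subset_of_card_le hsub h
      rw [hTS]
  have himg : A.image Finset.card = Finset.range (n + 1) := by
    apply eq_of_subset_of_card_le
    · intro m hm
      obtain ⟨S, hS, rfl⟩ := mem_image.mp hm
      exact mem_range.mpr (Nat.lt_succ_of_le (hcardle S))
    · rw [card_range, card_image_of_injOn (fun S hS T hT h => hinjcard S hS T hT h), hA]
  have hex : ∀ m ≤ n, ∃ S ∈ A, S.card = m := by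
    intro m hm
    have : m ∈ A.image Finset.card := himg ▸ mem_range.mpr (by omega)
    simpa [mem_image] using this
  -- the rank function
  set r : Fin n → ℕ := fun z => (A.filter fun U => z ∉ U).card with hr
  have hcount_lt : ∀ m, (A.filter fun U => U.card < m).card ≤ m := by
    intro m
    have hinj : Set.InjOn Finset.card ↑(A.filter fun U => U.card < m) := fun S hS T hT h =>
      hinjcard S (mem_of_mem_filter S (by exact_mod_cast hS)) T
        (mem_of_mem_filter T (by exact_mod_cast hT)) h
    calc (A.filter fun U => U.card < m).card
        = ((A.filter fun U => U.card < m).image Finset.card).card :=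
          (card_image_of_injOn hinj).symm
      _ ≤ (range m).card := by
          apply card_le_card
          intro k hk
          obtain ⟨S, hS, rfl⟩ := mem_image.mp hk
          exact mem_range.mpr (mem_filter.mp hS).2
      _ = m := card_range m
  have hge : ∀ z : Fin n, ∀ S ∈ A, z ∉ S → S.card + 1 ≤ r z := by
    intro z S hS hz
    have hsub1 : Finset.range (S.card + 1) ⊆
        (A.filter fun U => U.card ≤ S.card).image Finset.card := by
      intro m hm
      rw [mem_range] at hm
      obtain ⟨U, hU, hUc⟩ := hex m (by have := hcardle S; omega)
      exact mem_image.mpr ⟨U, mem_filter.mpr ⟨hU, by omega⟩, hUc⟩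
    have hsub2 : (A.filter fun U => U.card ≤ S.card) ⊆ A.filter fun U => z ∉ U := by
      intro U hU
      rw [mem_filter] at hU ⊢
      exact ⟨hU.1, fun hc => hz (hmono U hU.1 S hS hU.2 hc)⟩
    calc S.card + 1 = (Finset.range (S.card + 1)).card := (card_range _).symm
      _ ≤ ((A.filter fun U => U.card ≤ S.card).image Finset.card).card := card_le_card hsub1
      _ ≤ (A.filter fun U => U.card ≤ S.card).card := card_image_le
      _ ≤ r z := card_le_card hsub2
  have hmem_iff : ∀ z : Fin n, ∀ S ∈ A, (z ∈ S ↔ r z ≤ S.card) := by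
    intro z S hS
    constructor
    · intro hz
      refine le_trans (card_le_card ?_) (hcount_lt S.card)
      intro U hU
      rw [mem_filter] at hU ⊢
      refine ⟨hU.1, ?_⟩
      by_contra hc
      push_neg at hc
      exact hU.2 (hmono S hS U hU.1 hc hz)
    · intro h
      by_contra hz
      have := hge z S hS hz
      omega
  have hr1 : ∀ z : Fin n, 1 ≤ r z := by
    intro z
    obtain ⟨S, hS, hSc⟩ := hex 0 (by omega)
    have : z ∉ S := by rw [card_eq_zero.mp hSc]; exact notMem_empty z
    have := hge z S hS this
    omega
  have hrn : ∀ z : Fin n, r z ≤ n := by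
    intro z
    obtain ⟨S, hS, hSc⟩ := hex n le_rfl
    have hSu : S = univ := S.eq_univ_of_card (by simp [hSc])
    have : z ∈ S := hSu ▸ mem_univ z
    have := (hmem_iff z S hS).mp this
    omega
  have hrinj : ∀ z w : Fin n, r z = r w → z = w := by
    intro z w h
    obtain ⟨S, hS, hSc⟩ := hex (r z) (hrn z)
    obtain ⟨T, hT, hTc⟩ := hex (r z - 1) (by have := hrn z; omega)
    have h1 := hr1 z
    have hzS : z ∈ S := (hmem_iff z S hS).mpr (by omega)
    have hzT : z ∉ T := fun hc => by have := (hmem_iff z T hT).mp hc; omega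
    have hwS : w ∈ S := (hmem_iff w S hS).mpr (by omega)
    have hwT : w ∉ T := fun hc => by have := (hmem_iff w T hT).mp hc; omega
    have hTS : T ⊆ S := hmono T hT S hS (by omega)
    have hone : (S \ T).card = 1 := by rw [card_sdiff_of_subset hTS]; omega
    obtain ⟨a, ha⟩ := card_eq_one.mp hone
    have hz' : z = a := by
      have : z ∈ S \ T := mem_sdiff.mpr ⟨hzS, hzT⟩
      rw [ha, mem_singleton] at this; exact this
    have hw' : w = a := by
      have : w ∈ S \ T := mem_sdiff.mpr ⟨hwS, hwT⟩
      rw [ha, mem_singleton] at this; exact this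
    rw [hz', hw']
  set f : Fin n → Fin n := fun z => ⟨r z - 1, by have := hr1 z; have := hrn z; omega⟩ with hf
  have hfinj : Function.Injective f := by
    intro z w h
    apply hrinj
    have hval : r z - 1 = r w - 1 := congrArg Fin.val h
    have := hr1 z; have := hr1 w
    omega
  set σ : Equiv.Perm (Fin n) := Equiv.ofBijective f (Finite.injective_iff_bijective.mp hfinj)
    with hσ
  have hfiltcard : ∀ j ≤ n, (Finset.univ.filter fun x : Fin n => (x : ℕ) < j).card = j := by
    intro j hj
    have hb : ∀ m ∈ Finset.range j, m < n := fun m hm => lt_of_lt_of_le (mem_range.mp hm) hj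
    have : (Finset.univ.filter fun x : Fin n => (x : ℕ) < j) = (Finset.range j).attachFin hb := by
      ext x
      simp [Finset.mem_attachFin]
    rw [this, card_attachFin, card_range]
  have himage : ∀ S ∈ A, S.image (⇑σ) = Finset.univ.filter fun x : Fin n => (x : ℕ) < S.card := by
    intro S hS
    have hcoe : ⇑σ = f := rfl
    apply eq_of_subset_of_card_le
    · intro x hx
      obtain ⟨z, hz, rfl⟩ := mem_image.mp hx
      simp only [mem_filter, mem_univ, true_and, hcoe]
      have h1 := (hmem_iff z S hS).mp hz
      have h2 := hr1 z
      show r z - 1 < S.card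
      omega
    · rw [hfiltcard S.card (hcardle S), hcoe, card_image_of_injective S hfinj]
  refine ⟨σ, ?_⟩
  calc A.image (fun S => S.image ⇑σ)
      = A.image (fun S => Finset.univ.filter fun x : Fin n => (x : ℕ) < S.card) :=
        image_congr (fun S hS => himage S hS)
    _ = (A.image Finset.card).image
          (fun j => Finset.univ.filter fun x : Fin n => (x : ℕ) < j) := by
        rw [image_image]
        rfl
    _ = (Finset.range (n + 1)).image
          (fun j => Finset.univ.filter fun x : Fin n => (x : ℕ) < j) := by rw [himg]

end AuxSec

/-- if `VC(𝒜 ∩ 𝒜) ≤ 1` and `VC(𝒜 ∪ 𝒜) ≤ 1` then `|𝒜| ≤ n + 1`, and in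
case of equality `𝒜` is, up to a permutation of `[n]`, the complete chain
`{∅, [1], [2], …, [n]}`. -/
theorem statement19 (n : ℕ) (hn : 0 < n) (A : Finset (Finset (Fin n)))
    (hcap : vcDim (Finset.image₂ (fun S T => S ∩ T) A A) ≤ 1)
    (hcup : vcDim (Finset.image₂ (fun S T => S ∪ T) A A) ≤ 1) :
    A.card ≤ n + 1 ∧
      (A.card = n + 1 →
        ∃ σ : Equiv.Perm (Fin n),
          A.image (fun S => S.image σ) =
            (Finset.range (n + 1)).image
              (fun j => Finset.univ.filter (fun x : Fin n => (x : ℕ) < j))) :=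
  statement19_aux n hn A hcap hcup
end
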